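/- Under the separable covariance structure Cov(\varepsilon) = \Sigma_N \otimes \Sigma_T and independence of epoch-(T+1) errors with covariance (\Sigma_T)_{1,1} \Sigma_N, the pooled prediction error satisfies E_i^{pool} = (x_{i,T+1}' (\sum_j X_j'X_j)^{-1} \sum_j X_j'X_j (\beta_j - \beta_i))^2 + Tr[(\sum_j X_j'X_j)^{-1} x_{i,T+1} x_{i,T+1}' (\sum_j X_j'X_j)^{-1} \sum_{j,k} (\Sigma_N)_{j,k} X_j' \Sigma_T X_k] + (\Sigma_N)_{i,i} (\Sigma_T)_{1,1}. -/

import Mathlib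

/-! The forecast error is `b + c ⬝ᵥ vec ε - ε_{i,T+1}`: the bias `b` is deterministic because
`S⁻¹ S = 1` for `S = ∑ⱼ Xⱼ'Xⱼ`, and `c = 𝐗 (S⁻¹ x_{i,T+1})` for the stacked design matrix `𝐗`.
The two random parts are centred and independent, so the mean squared error is
`b² + E[(c ⬝ᵥ vec ε)²] + E[ε_{i,T+1}²]`. The middle term is the quadratic form of
`Cov(vec ε) = Σ_N ⊗ Σ_T` at `c`, and cyclicity of the trace turns it into
`Tr[S⁻¹ x x' S⁻¹ 𝐗'(Σ_N ⊗ Σ_T)𝐗]`, where `𝐗'(Σ_N ⊗ Σ_T)𝐗 = ∑_{j,k} (Σ_N)_{jk} Xⱼ'Σ_T Xₖ`. -/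

open scoped Kronecker
open Matrix MeasureTheory ProbabilityTheory

section Design

variable {ι τ κ R : Type*} [Fintype ι] [Fintype τ] [CommRing R]

/-- The pooled design matrix, with rows indexed by (unit, period); `vec ε` is then
`Function.uncurry ε`. -/
def stackRows (X : ι → Matrix τ κ R) : Matrix (ι × τ) κ R :=
  Matrix.of (Function.uncurry X)

theorem stackRows_transpose_mulVec (X : ι → Matrix τ κ R) (u : ι → τ → R) :
    (stackRows X)ᵀ *ᵥ Function.uncurry u = ∑ j, (X j)ᵀ *ᵥ u j := by
  ext k
  simp [stackRows, mulVec, dotProduct, Fintype.sum_prod_type, Finset.sum_apply, Function.uncurry]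

theorem stackRows_transpose_mul_kronecker_mul (X : ι → Matrix τ κ R)
    (SigmaN : Matrix ι ι R) (SigmaT : Matrix τ τ R) :
    (stackRows X)ᵀ * (SigmaN ⊗ₖ SigmaT) * stackRows X
      = ∑ j, ∑ k, SigmaN j k • ((X j)ᵀ * SigmaT * X k) := by
  ext a b
  simp only [stackRows, mul_apply, transpose_apply, of_apply, kronecker_apply,
    Fintype.sum_prod_type, Function.uncurry, Matrix.sum_apply, Matrix.smul_apply, smul_eq_mul,
    Finset.sum_mul, Finset.mul_sum]
  refine (Finset.sum_congr rfl fun k _ => Finset.sum_comm).trans (Finset.sum_comm.trans ?_)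
  exact Finset.sum_congr rfl fun j _ => Finset.sum_congr rfl fun k _ =>
    Finset.sum_congr rfl fun t _ => Finset.sum_congr rfl fun s _ => by ring

theorem trace_mul_vecMulVec_mul_mul [Fintype κ] (A M : Matrix κ κ R) (x : κ → R) :
    (A * vecMulVec x x * A * M).trace = (x ᵥ* A) ⬝ᵥ (M *ᵥ (A *ᵥ x)) := by
  rw [mul_vecMulVec, vecMulVec_mul, vecMulVec_mul, trace_vecMulVec, dotProduct_comm,
    ← dotProduct_mulVec]

theorem pooled_forecast_error_eq [Fintype κ] [DecidableEq κ] {X : ι → Matrix τ κ R}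
    (hS : IsUnit (∑ j, (X j)ᵀ * X j).det)
    (x : κ → R) (β : ι → κ → R) (u : ι → τ → R) (i : ι) (e : R) :
    x ⬝ᵥ ((∑ j, (X j)ᵀ * X j)⁻¹ *ᵥ ∑ j, (X j)ᵀ *ᵥ (X j *ᵥ β j + u j)) - (x ⬝ᵥ β i + e)
      = x ⬝ᵥ ((∑ j, (X j)ᵀ * X j)⁻¹ *ᵥ ∑ j, ((X j)ᵀ * X j) *ᵥ (β j - β i))
        + (stackRows X *ᵥ (x ᵥ* (∑ j, (X j)ᵀ * X j)⁻¹)) ⬝ᵥ Function.uncurry u - e := by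
  have hsplit : ∑ j, (X j)ᵀ *ᵥ (X j *ᵥ β j + u j)
      = ∑ j, ((X j)ᵀ * X j) *ᵥ (β j - β i) + (∑ j, (X j)ᵀ * X j) *ᵥ β i
        + (stackRows X)ᵀ *ᵥ Function.uncurry u := by
    rw [stackRows_transpose_mulVec, sum_mulVec, ← Finset.sum_add_distrib,
      ← Finset.sum_add_distrib]
    refine Finset.sum_congr rfl fun j _ => ?_
    rw [mulVec_add, mulVec_sub, mulVec_mulVec]
    abel
  have hnoise : x ⬝ᵥ ((∑ j, (X j)ᵀ * X j)⁻¹ *ᵥ ((stackRows X)ᵀ *ᵥ Function.uncurry u))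
      = (stackRows X *ᵥ (x ᵥ* (∑ j, (X j)ᵀ * X j)⁻¹)) ⬝ᵥ Function.uncurry u := by
    rw [dotProduct_mulVec, dotProduct_mulVec, vecMul_transpose]
  rw [hsplit, mulVec_add, mulVec_add, mulVec_mulVec, nonsing_inv_mul _ hS, one_mulVec,
    dotProduct_add, dotProduct_add, hnoise]
  ring

end Design

section SecondMoments

variable {Ω : Type*} [MeasurableSpace Ω] {μ : Measure Ω}

theorem memLp_two_of_integrable_mul_self {f : Ω → ℝ} (hf : AEStronglyMeasurable f μ)
    (h : Integrable (fun ω => f ω * f ω) μ) : MemLp f 2 μ :=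
  (memLp_two_iff_integrable_sq hf).2 (by simpa only [sq] using h)

theorem integral_dotProduct {ι : Type*} [Fintype ι] {v : Ω → ι → ℝ}
    (hv : ∀ p, Integrable (fun ω => v ω p) μ) (c : ι → ℝ) :
    ∫ ω, c ⬝ᵥ v ω ∂μ = c ⬝ᵥ fun p => ∫ ω, v ω p ∂μ := by
  simp only [dotProduct]
  rw [integral_finsetSum _ fun p _ => (hv p).const_mul (c p)]
  simp only [integral_const_mul]

theorem memLp_dotProduct {ι : Type*} [Fintype ι] {v : Ω → ι → ℝ} {q : ENNReal}
    (hv : ∀ p, MemLp (fun ω => v ω p) q μ) (c : ι → ℝ) :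
    MemLp (fun ω => c ⬝ᵥ v ω) q μ :=
  memLp_finsetSum _ fun p _ => (hv p).const_mul (c p)

theorem integral_dotProduct_sq {ι : Type*} [Fintype ι] {v : Ω → ι → ℝ} {C : Matrix ι ι ℝ}
    (hv : ∀ p q, Integrable (fun ω => v ω p * v ω q) μ)
    (hC : ∀ p q, ∫ ω, v ω p * v ω q ∂μ = C p q) (c : ι → ℝ) :
    ∫ ω, (c ⬝ᵥ v ω) ^ 2 ∂μ = c ⬝ᵥ (C *ᵥ c) := by
  have hexpand : ∀ ω, (c ⬝ᵥ v ω) ^ 2 = ∑ p, ∑ q, c p * c q * (v ω p * v ω q) := fun ω => by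
    rw [sq, dotProduct, Finset.sum_mul_sum]
    exact Finset.sum_congr rfl fun p _ => Finset.sum_congr rfl fun q _ => by ring
  simp_rw [hexpand]
  rw [integral_finsetSum _ fun p _ => integrable_finsetSum _ fun q _ => (hv p q).const_mul _]
  simp_rw [integral_finsetSum _ fun q _ => (hv _ q).const_mul _, integral_const_mul, hC,
    dotProduct, mulVec, dotProduct, Finset.mul_sum]
  exact Finset.sum_congr rfl fun p _ => Finset.sum_congr rfl fun q _ => by ring

theorem integral_sq_add_sub_of_indepFun [IsProbabilityMeasure μ] {L e : Ω → ℝ}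
    (hL : MemLp L 2 μ) (he : MemLp e 2 μ) (hL0 : μ[L] = 0) (he0 : μ[e] = 0)
    (h : IndepFun L e μ) (b : ℝ) :
    ∫ ω, (b + L ω - e ω) ^ 2 ∂μ = b ^ 2 + ∫ ω, L ω ^ 2 ∂μ + ∫ ω, e ω ^ 2 ∂μ := by
  have hLe : MemLp (L - e) 2 μ := hL.sub he
  have hmean : ∫ ω, b + (L - e) ω ∂μ = b := by
    rw [integral_add (integrable_const b) (hLe.integrable one_le_two),
      integral_sub' (hL.integrable one_le_two) (he.integrable one_le_two), hL0, he0]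
    simp
  have hvar := variance_eq_sub (X := fun ω => b + (L - e) ω) ((memLp_const b).add hLe)
  rw [variance_const_add hLe.aestronglyMeasurable, variance_sub hL he,
    h.covariance_eq_zero hL he, variance_of_integral_eq_zero hL.aemeasurable hL0,
    variance_of_integral_eq_zero he.aemeasurable he0, hmean] at hvar
  simp only [Pi.pow_apply, Pi.sub_apply] at hvar
  simp only [add_sub_assoc]
  linarith

end SecondMoments

/-- Closed form of the pooled prediction error (Lemma 1, second part).
Under the separable covariance structure `Cov(ε) = Σ_N ⊗ Σ_T` and independent
period-`T+1` errors with covariance `(Σ_T)₁₁ Σ_N`, the pooled prediction error is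
`E_i^pool = (x_{i,T+1}' (∑ⱼXⱼ'Xⱼ)⁻¹ ∑ⱼ Xⱼ'Xⱼ(βⱼ-βᵢ))²
  + Tr[(∑ⱼXⱼ'Xⱼ)⁻¹ x_{i,T+1}x_{i,T+1}' (∑ⱼXⱼ'Xⱼ)⁻¹ ∑_{j,k}(Σ_N)_{jk} Xⱼ'Σ_T Xₖ]
  + (Σ_N)ᵢᵢ (Σ_T)₁₁`,
where `β̂ᵖᵒᵒˡ = (∑ⱼXⱼ'Xⱼ)⁻¹ ∑ⱼ Xⱼ'yⱼ`, `yⱼ = Xⱼβⱼ + εⱼ`,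
`y_{i,T+1} = x_{i,T+1}'βᵢ + ε_{i,T+1}` (regressors fixed). -/
theorem stmt_9 {N T K : ℕ} (hT : 0 < T) {Ω : Type*} [MeasurableSpace Ω]
    (μ : Measure Ω) [IsProbabilityMeasure μ]
    (X : Fin N → Matrix (Fin T) (Fin K) ℝ)
    (β : Fin N → Fin K → ℝ) (x : Fin N → Fin K → ℝ)
    (SigmaN : Matrix (Fin N) (Fin N) ℝ) (SigmaT : Matrix (Fin T) (Fin T) ℝ)
    (ε : Ω → Fin N → Fin T → ℝ) (εnext : Ω → Fin N → ℝ)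
    (hmeas : Measurable ε) (hmeasnext : Measurable εnext)
    (hmean : ∀ i s, ∫ ω, ε ω i s ∂μ = 0)
    (hInt : ∀ i j s t, Integrable (fun ω => ε ω i s * ε ω j t) μ)
    (hcov : ∀ i j s t, ∫ ω, ε ω i s * ε ω j t ∂μ = SigmaN i j * SigmaT s t)
    (hmeannext : ∀ i, ∫ ω, εnext ω i ∂μ = 0)
    (hIntnext : ∀ i j, Integrable (fun ω => εnext ω i * εnext ω j) μ)
    (hcovnext : ∀ i j, ∫ ω, εnext ω i * εnext ω j ∂μ
        = SigmaT ⟨0, hT⟩ ⟨0, hT⟩ * SigmaN i j)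
    (hindep : IndepFun εnext ε μ)
    (hS : IsUnit (∑ j, (X j)ᵀ * X j).det)
    (i : Fin N) :
    ∫ ω, (x i ⬝ᵥ ((∑ j, (X j)ᵀ * X j)⁻¹ *ᵥ ∑ j, (X j)ᵀ *ᵥ (X j *ᵥ β j + ε ω j))
            - (x i ⬝ᵥ β i + εnext ω i)) ^ 2 ∂μ
      = (x i ⬝ᵥ ((∑ j, (X j)ᵀ * X j)⁻¹ *ᵥ ∑ j, ((X j)ᵀ * X j) *ᵥ (β j - β i))) ^ 2
        + ((∑ j, (X j)ᵀ * X j)⁻¹ * Matrix.vecMulVec (x i) (x i)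
            * (∑ j, (X j)ᵀ * X j)⁻¹
            * ∑ j, ∑ k, SigmaN j k • ((X j)ᵀ * SigmaT * X k)).trace
        + SigmaN i i * SigmaT ⟨0, hT⟩ ⟨0, hT⟩ := by
  simp_rw [pooled_forecast_error_eq hS]
  set A := (∑ j, (X j)ᵀ * X j)⁻¹
  set w := x i ᵥ* A
  set c := stackRows X *ᵥ w
  have hA : A *ᵥ x i = w := by
    rw [← vecMul_transpose, transpose_nonsing_inv, transpose_sum]
    simp only [transpose_mul, transpose_transpose, A, w]
  have hε : ∀ p, MemLp (fun ω => Function.uncurry (ε ω) p) 2 μ := fun ⟨j, s⟩ =>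
    memLp_two_of_integrable_mul_self (by fun_prop) (hInt j j s s)
  have he : MemLp (fun ω => εnext ω i) 2 μ :=
    memLp_two_of_integrable_mul_self (by fun_prop) (hIntnext i i)
  have hL0 : ∫ ω, c ⬝ᵥ Function.uncurry (ε ω) ∂μ = 0 := by
    rw [integral_dotProduct fun p => (hε p).integrable one_le_two]
    simp [Function.uncurry, hmean]
  have hindep_noise : IndepFun (fun ω => c ⬝ᵥ Function.uncurry (ε ω)) (fun ω => εnext ω i) μ :=
    (hindep.comp (φ := fun v : Fin N → ℝ => v i)
      (ψ := fun u : Fin N → Fin T → ℝ => c ⬝ᵥ Function.uncurry u)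
      (by fun_prop) (by fun_prop)).symm
  have hquad : (x i ᵥ* A) ⬝ᵥ (((stackRows X)ᵀ * (SigmaN ⊗ₖ SigmaT) * stackRows X) *ᵥ w)
      = c ⬝ᵥ ((SigmaN ⊗ₖ SigmaT) *ᵥ c) := by
    rw [← mulVec_mulVec, ← mulVec_mulVec, dotProduct_mulVec, vecMul_transpose]
  rw [integral_sq_add_sub_of_indepFun (memLp_dotProduct hε c) he hL0 (hmeannext i) hindep_noise,
    integral_dotProduct_sq (v := fun ω => Function.uncurry (ε ω)) (C := SigmaN ⊗ₖ SigmaT)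
      (fun p q => hInt p.1 q.1 p.2 q.2) (fun p q => hcov p.1 q.1 p.2 q.2),
    ← stackRows_transpose_mul_kronecker_mul, trace_mul_vecMulVec_mul_mul, hA, hquad]
  simp only [sq, hcovnext, mul_comm]
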